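/- arXiv:0707.3796 — 2 statements merged into one kernel-verified Lean document; each statement's English description precedes it below -/
import Mathlib

section
/- If z is a p-vector whose annihilator contains linearly independent vectors z₁,…,z_q, then there exists a (p−q)-vector y such that z = z₁ ∧ z₂ ∧ ⋯ ∧ z_q ∧ y. -/
/-!
Choose a functional `d` with `d z₁ = 1` vanishing on `z₂, …, z_q`, and contract with it. Since
`z₁ ∧ z = 0`, the derivation rule `d ⌋ (z₁ ∧ z) = d(z₁) z - z₁ ∧ (d ⌋ z)` gives
`z = z₁ ∧ (d ⌋ z)`, while `d ⌋ z` is a `(p-1)`-vector annihilated by `z₂, …, z_q`; induct on `q`.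
-/

open ExteriorAlgebra

namespace ExteriorAlgebra

section CommRing

variable {R : Type*} [CommRing R] {M : Type*} [AddCommGroup M] [Module R M]

theorem mul_ι_of_mem_exteriorPower {n : ℕ} {x : ExteriorAlgebra R M} (hx : x ∈ ⋀[R]^n M)
    (v : M) : x * ι R v = (-1 : R) ^ n • (ι R v * x) := by
  induction hx using Submodule.pow_induction_on_left' with
  | algebraMap r => rw [pow_zero, one_smul, Algebra.commutes]
  | add x y i hx hy ihx ihy => rw [add_mul, mul_add, ihx, ihy, smul_add]
  | mem_mul m hm i x hx ih =>
    obtain ⟨u, rfl⟩ := hm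
    have hanti : ι R u * ι R v = -(ι R v * ι R u) := eq_neg_of_add_eq_zero_left (ι_add_mul_swap u v)
    rw [mul_assoc, ih, mul_smul_comm, ← mul_assoc, hanti, neg_mul, mul_assoc, smul_neg,
      ← neg_smul, pow_succ, mul_neg_one]

theorem mul_ι_eq_zero_iff_of_mem_exteriorPower {n : ℕ} {x : ExteriorAlgebra R M}
    (hx : x ∈ ⋀[R]^n M) (v : M) : x * ι R v = 0 ↔ ι R v * x = 0 := by
  rw [mul_ι_of_mem_exteriorPower hx, (isUnit_neg_one.pow n).smul_eq_zero]

theorem contractLeft_mem_exteriorPower (d : Module.Dual R M) {n : ℕ} {x : ExteriorAlgebra R M}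
    (hx : x ∈ ⋀[R]^(n + 1) M) : CliffordAlgebra.contractLeft d x ∈ ⋀[R]^n M := by
  induction n generalizing x with
  | zero =>
    rw [zero_add, exteriorPower, pow_one] at hx
    obtain ⟨u, rfl⟩ := hx
    rw [CliffordAlgebra.contractLeft_ι, exteriorPower, pow_zero]
    exact Submodule.algebraMap_mem _
  | succ n ih =>
    rw [exteriorPower, pow_succ'] at hx ⊢
    induction hx using Submodule.mul_induction_on' with
    | mem_mul_mem m hm y hy =>
      obtain ⟨u, rfl⟩ := hm
      rw [CliffordAlgebra.contractLeft_ι_mul]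
      refine sub_mem (Submodule.smul_mem _ _ ?_) ?_
      · rwa [← pow_succ']
      · exact Submodule.mul_mem_mul (LinearMap.mem_range_self _ u) (ih hy)
    | add x _ y _ hx hy => rw [map_add]; exact add_mem hx hy

theorem contractLeft_mem_exteriorPower_sub_one (d : Module.Dual R M) {n : ℕ}
    {x : ExteriorAlgebra R M} (hx : x ∈ ⋀[R]^n M) :
    CliffordAlgebra.contractLeft d x ∈ ⋀[R]^(n - 1) M := by
  cases n with
  | zero =>
    obtain ⟨r, rfl⟩ := Submodule.mem_one.mp hx
    rw [CliffordAlgebra.contractLeft_algebraMap]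
    exact zero_mem _
  | succ n => exact contractLeft_mem_exteriorPower d hx

theorem eq_ι_mul_contractLeft_of_ι_mul_eq_zero {d : Module.Dual R M} {v : M}
    {x : ExteriorAlgebra R M} (hv : d v = 1) (h : ι R v * x = 0) :
    x = ι R v * CliffordAlgebra.contractLeft d x := by
  have := CliffordAlgebra.contractLeft_ι_mul d v x
  rwa [h, map_zero, hv, one_smul, eq_comm, sub_eq_zero] at this

theorem ι_mul_contractLeft_eq_zero_of_ι_mul_eq_zero {d : Module.Dual R M} {v : M}
    {x : ExteriorAlgebra R M} (hv : d v = 0) (h : ι R v * x = 0) :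
    ι R v * CliffordAlgebra.contractLeft d x = 0 := by
  have := CliffordAlgebra.contractLeft_ι_mul d v x
  rwa [h, map_zero, hv, zero_smul, zero_sub, eq_comm, neg_eq_zero] at this

end CommRing

section Field

variable {K : Type*} [Field K] {V : Type*} [AddCommGroup V] [Module K V]

theorem _root_.Submodule.exists_dual_eq_one_of_notMem {p : Submodule K V} {x : V} (hx : x ∉ p) :
    ∃ d : Module.Dual K V, d x = 1 ∧ ∀ y ∈ p, d y = 0 := by
  obtain ⟨d, hdx, hdp⟩ := p.exists_dual_map_eq_bot_of_notMem hx inferInstance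
  refine ⟨(d x)⁻¹ • d, inv_mul_cancel₀ hdx, fun y hy => ?_⟩
  rw [LinearMap.smul_apply, (Submodule.eq_bot_iff _).mp hdp (d y) ⟨y, hy, rfl⟩, smul_zero]

theorem exists_eq_ιMulti_mul_of_ι_mul_eq_zero {q : ℕ} {f : Fin q → V}
    (hf : LinearIndependent K f) {p : ℕ} {z : ExteriorAlgebra K V} (hz : z ∈ ⋀[K]^p V)
    (hann : ∀ i, ι K (f i) * z = 0) : ∃ y ∈ ⋀[K]^(p - q) V, z = ιMulti K q f * y := by
  induction q generalizing p z with
  | zero => exact ⟨z, hz, by rw [ιMulti_zero_apply, one_mul]⟩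
  | succ q ih =>
    obtain ⟨d, hd_head, hd_tail⟩ := Submodule.exists_dual_eq_one_of_notMem
      (hf.notMem_span_image (s := Set.range Fin.succ) (x := 0) (by simp))
    have hd_succ (j : Fin q) : d (f j.succ) = 0 :=
      hd_tail _ (Submodule.subset_span ⟨_, ⟨j, rfl⟩, rfl⟩)
    obtain ⟨y, hy, hw⟩ := ih (hf.comp Fin.succ (Fin.succ_injective q))
      (contractLeft_mem_exteriorPower_sub_one d hz)
      fun j => ι_mul_contractLeft_eq_zero_of_ι_mul_eq_zero (hd_succ j) (hann j.succ)
    refine ⟨y, by rwa [Nat.sub_sub, Nat.add_comm] at hy, ?_⟩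
    calc z = ι K (f 0) * CliffordAlgebra.contractLeft d z :=
          eq_ι_mul_contractLeft_of_ι_mul_eq_zero hd_head (hann 0)
      _ = ιMulti K (q + 1) f * y := by rw [hw, ← mul_assoc, ιMulti_succ_apply]; rfl

end Field

end ExteriorAlgebra

theorem exists_wedge_factorization_general
    (K : Type*) [Field K] (V : Type*) [AddCommGroup V] [Module K V]
    (p q : ℕ) (z : ExteriorAlgebra K V)
    (hz : z ∈ ⋀[K]^p V) (f : Fin q → V) (hf : LinearIndependent K f)
    (hann : ∀ i, z * ExteriorAlgebra.ι K (f i) = 0) :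
    ∃ y ∈ ⋀[K]^(p - q) V, z = (ExteriorAlgebra.ιMulti K q f) * y :=
  exists_eq_ιMulti_mul_of_ι_mul_eq_zero hf hz fun i =>
    (mul_ι_eq_zero_iff_of_mem_exteriorPower hz (f i)).mp (hann i)

/-- If `z` is a `p`-vector whose annihilator contains linearly independent vectors
`z₁, …, z_q`, then there is a `(p-q)`-vector `y` with `z = z₁ ∧ ⋯ ∧ z_q ∧ y`. -/
theorem exists_wedge_factorization
    (K : Type*) [Field K] (V : Type*) [AddCommGroup V] [Module K V]
    [FiniteDimensional K V] (p q : ℕ) (z : ExteriorAlgebra K V)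
    (hz : z ∈ ⋀[K]^p V) (f : Fin q → V) (hf : LinearIndependent K f)
    (hann : ∀ i, z * ExteriorAlgebra.ι K (f i) = 0) :
    ∃ y ∈ ⋀[K]^(p - q) V, z = (ExteriorAlgebra.ιMulti K q f) * y :=
  exists_wedge_factorization_general K V p q z hz f hf hann
end

section
/- Let H be a Hermitian operator on ℂ^{n+1} with a nondegenerate eigenvector e₀ of eigenvalue E₀, and let A = Re H, B = Im H (restricted to the orthogonal complement of e₀). Then the characteristic polynomial of the real 2n×2n Hessian matrix 𝓗 = [[A − E₀I, −B],[B, A − E₀I]] satisfies det(𝓗 − ωI_{2n}) = |det(H − (E₀+ω)I_n)|², so the spectrum of 𝓗 equals the set of transition energies E_i − E₀, each with doubled multiplicity. -/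
/-!
Over any commutative ring containing a square root `i` of `-1`, the block matrix
`[[X, -Y], [Y, X]]`, multiplied on either side by a unipotent block shear, becomes block
triangular with diagonal blocks `X + iY` and `X - iY`. For a complex matrix `M = X + iY` with
`X`, `Y` real the second block is the entrywise conjugate of `M`, so the real `2n × 2n`
realification of `M` has determinant `det M * conj (det M) = |det M|²`. The Hessian shifted
by `ω` is the realification of `H - (E₀ + ω)`, which gives the determinant identity, and a
real `ω` lies in a spectrum exactly when the corresponding determinant vanishes.
-/

open Matrix Complex

theorem Matrix.det_fromBlocks_neg_eq_det_add_mul_det_sub {R m : Type*} [CommRing R] [Fintype m]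
    [DecidableEq m] (X Y : Matrix m m R) {i : R} (hi : i * i = -1) :
    (fromBlocks X (-Y) Y X).det = (X + i • Y).det * (X - i • Y).det := by
  have hshear : fromBlocks 1 (i • 1) 0 1 * fromBlocks X (-Y) Y X * fromBlocks 1 (-i • 1) 0 1 =
      fromBlocks (X + i • Y) 0 Y (X - i • Y) := by
    simp only [fromBlocks_multiply, Matrix.one_mul, Matrix.mul_one, Matrix.zero_mul,
      Matrix.mul_zero, Matrix.smul_mul, Matrix.mul_smul, add_zero, zero_add]
    congr 1
    · linear_combination (norm := module) (-hi) • Y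
    · module
  simpa [det_fromBlocks_zero₂₁, det_fromBlocks_zero₁₂] using congrArg det hshear

theorem Matrix.det_fromBlocks_re_im {m : Type*} [Fintype m] [DecidableEq m]
    (M : Matrix m m ℂ) :
    (fromBlocks (M.map re) (-M.map im) (M.map im) (M.map re)).det = normSq M.det := by
  have hadd : (M.map re).map ofRealHom + I • (M.map im).map ofRealHom = M := by
    ext i j; simp [mul_comm I]
  have hsub : (M.map re).map ofRealHom - I • (M.map im).map ofRealHom = M.map (starRingEnd ℂ) := by
    ext i j; apply Complex.ext <;> simp
  apply ofReal_injective
  rw [← mul_conj, ← ofRealHom_eq_coe, ofRealHom.map_det, RingHom.mapMatrix_apply, fromBlocks_map,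
    Matrix.map_neg _ (map_neg ofRealHom),
    det_fromBlocks_neg_eq_det_add_mul_det_sub _ _ I_mul_I, hadd, hsub, ← RingHom.mapMatrix_apply,
    ← RingHom.map_det]

theorem Matrix.fromBlocks_sub_smul_one {R l m : Type*} [Ring R] [DecidableEq l] [DecidableEq m]
    (A : Matrix l l R) (B : Matrix l m R) (C : Matrix m l R) (D : Matrix m m R) (r : R) :
    fromBlocks A B C D - r • 1 = fromBlocks (A - r • 1) B C (D - r • 1) := by
  ext (i | i) (j | j) <;> simp [one_apply]

theorem Matrix.map_re_sub_ofReal_smul_one {m : Type*} [DecidableEq m] (M : Matrix m m ℂ) (r : ℝ) :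
    (M - (r : ℂ) • 1).map re = M.map re - r • 1 := by
  ext i j; by_cases h : i = j <;> simp [h]

theorem Matrix.map_im_sub_ofReal_smul_one {m : Type*} [DecidableEq m] (M : Matrix m m ℂ) (r : ℝ) :
    (M - (r : ℂ) • 1).map im = M.map im := by
  ext i j; by_cases h : i = j <;> simp [h]

theorem Matrix.mem_spectrum_iff_det_sub_smul_one_eq_zero {K m : Type*} [Field K] [Fintype m]
    [DecidableEq m] (M : Matrix m m K) (r : K) :
    r ∈ spectrum K M ↔ (M - r • 1).det = 0 := by
  rw [spectrum.mem_iff, isUnit_iff_isUnit_det, isUnit_iff_ne_zero, not_not,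
    Algebra.algebraMap_eq_smul_one, ← neg_sub, det_neg]
  simp

theorem hessian_det_eq_normSq_det_general
    (n : ℕ) (H : Matrix (Fin n) (Fin n) ℂ) (E₀ : ℝ) :
    let A : Matrix (Fin n) (Fin n) ℝ := H.map Complex.re
    let B : Matrix (Fin n) (Fin n) ℝ := H.map Complex.im
    let 𝓗 : Matrix (Fin n ⊕ Fin n) (Fin n ⊕ Fin n) ℝ :=
      Matrix.fromBlocks (A - E₀ • 1) (-B) B (A - E₀ • 1)
    (∀ ω : ℝ, (𝓗 - ω • 1).det = Complex.normSq (H - ((E₀ + ω : ℝ) : ℂ) • 1).det) ∧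
    (∀ ω : ℝ, ω ∈ spectrum ℝ 𝓗 ↔ ((E₀ + ω : ℝ) : ℂ) ∈ spectrum ℂ H) := by
  intro A B 𝓗
  have hdet (ω : ℝ) :
      (𝓗 - ω • 1).det = Complex.normSq (H - ((E₀ + ω : ℝ) : ℂ) • 1).det := by
    simp only [𝓗, A, B]
    rw [fromBlocks_sub_smul_one, sub_sub, ← add_smul, ← map_re_sub_ofReal_smul_one,
      ← map_im_sub_ofReal_smul_one H (E₀ + ω), det_fromBlocks_re_im]
  refine ⟨hdet, fun ω => ?_⟩
  rw [mem_spectrum_iff_det_sub_smul_one_eq_zero, mem_spectrum_iff_det_sub_smul_one_eq_zero, hdet,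
    normSq_eq_zero]

/-- For a Hermitian `n×n` matrix `H` (the restriction of the Hamiltonian to the
orthogonal complement of the eigenvector `e₀` with eigenvalue `E₀`), with
`A = Re H`, `B = Im H`, the real `2n×2n` Hessian `𝓗 = [[A−E₀I, −B],[B, A−E₀I]]`
satisfies `det(𝓗 − ωI) = |det(H − (E₀+ω)I)|²`; hence `ω` belongs to the spectrum of
`𝓗` iff `E₀ + ω` is an eigenvalue of `H`, i.e. the spectrum of `𝓗` is the set of
transition energies `E_i − E₀` (each occurring with doubled multiplicity, by the
displayed characteristic-polynomial identity). -/
theorem hessian_det_eq_normSq_det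
    (n : ℕ) (H : Matrix (Fin n) (Fin n) ℂ) (hH : H.IsHermitian) (E₀ : ℝ) :
    let A : Matrix (Fin n) (Fin n) ℝ := H.map Complex.re
    let B : Matrix (Fin n) (Fin n) ℝ := H.map Complex.im
    let 𝓗 : Matrix (Fin n ⊕ Fin n) (Fin n ⊕ Fin n) ℝ :=
      Matrix.fromBlocks (A - E₀ • 1) (-B) B (A - E₀ • 1)
    (∀ ω : ℝ, (𝓗 - ω • 1).det = Complex.normSq (H - ((E₀ + ω : ℝ) : ℂ) • 1).det) ∧
    (∀ ω : ℝ, ω ∈ spectrum ℝ 𝓗 ↔ ((E₀ + ω : ℝ) : ℂ) ∈ spectrum ℂ H) :=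
  hessian_det_eq_normSq_det_general n H E₀
end
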